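/- arXiv:2506.19059 — 2 statements merged into one kernel-verified Lean document; each statement's English description precedes it below -/
import Mathlib

section
/- Let U ⊆ ℝⁿ be a nonempty, open, bounded set with diameter d > 0. For any R > d there exists a point y ∉ Ū such that min{|x−y| : x ∈ Ū} = R − d and max{|x−y| : x ∈ Ū} = R. -/
/-! Take a diametral pair `ξ₁, ξ₂` of `Ū` and let `y` be the point on the ray from `ξ₁` through `ξ₂`
at distance `R` from `ξ₁`, so that `dist ξ₂ y = R - d`. For `x ∈ Ū` the triangle inequality gives
`dist x y ≤ dist x ξ₂ + dist ξ₂ y ≤ R` and `dist x y ≥ dist ξ₁ y - dist ξ₁ x ≥ R - d`, with equality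
at `ξ₁` and `ξ₂` respectively. -/

open Set Metric

theorem IsCompact.exists_dist_eq_diam {α : Type*} [PseudoMetricSpace α] {K : Set α}
    (hK : IsCompact K) (hne : K.Nonempty) : ∃ a ∈ K, ∃ b ∈ K, dist a b = diam K := by
  obtain ⟨⟨a, b⟩, ⟨ha, hb⟩, hmax⟩ := (hK.prod hK).exists_isMaxOn (hne.prod hne)
    (continuous_fst.dist continuous_snd).continuousOn
  refine ⟨a, ha, b, hb, le_antisymm (dist_le_diam_of_mem hK.isBounded ha hb) ?_⟩
  exact diam_le_of_forall_dist_le dist_nonneg fun x hx x' hx' => hmax (mk_mem_prod hx hx')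

section DiametralPair

variable {α : Type*} [PseudoMetricSpace α] {S : Set α} {a b y : α} {R : ℝ}

theorem isGreatest_image_dist_of_diametral (hS : Bornology.IsBounded S) (ha : a ∈ S)
    (hb : b ∈ S) (hay : dist a y = R) (hby : dist b y = R - diam S) :
    IsGreatest ((fun x => dist x y) '' S) R := by
  refine ⟨⟨a, ha, hay⟩, ?_⟩
  rintro _ ⟨x, hx, rfl⟩
  calc dist x y ≤ dist x b + dist b y := dist_triangle x b y
    _ ≤ diam S + (R - diam S) := by gcongr; exacts [dist_le_diam_of_mem hS hx hb, hby.le]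
    _ = R := by ring

theorem isLeast_image_dist_of_diametral (hS : Bornology.IsBounded S) (ha : a ∈ S)
    (hb : b ∈ S) (hay : dist a y = R) (hby : dist b y = R - diam S) :
    IsLeast ((fun x => dist x y) '' S) (R - diam S) := by
  refine ⟨⟨b, hb, hby⟩, ?_⟩
  rintro _ ⟨x, hx, rfl⟩
  linarith [dist_triangle a x y, dist_le_diam_of_mem hS ha hx]

end DiametralPair

theorem dist_lineMap_div {E : Type*} [NormedAddCommGroup E] [NormedSpace ℝ E] {a b : E}
    {d R : ℝ} (hab : dist a b = d) (hd : 0 < d) (hR : d ≤ R) :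
    dist a (AffineMap.lineMap a b (R / d)) = R ∧
      dist b (AffineMap.lineMap a b (R / d)) = R - d := by
  have hle : 1 ≤ R / d := (one_le_div hd).mpr hR
  refine ⟨?_, ?_⟩
  · rw [dist_left_lineMap, hab, Real.norm_of_nonneg (by linarith), div_mul_cancel₀ _ hd.ne']
  · rw [dist_right_lineMap, hab, Real.norm_of_nonpos (by linarith), neg_sub, sub_mul,
      div_mul_cancel₀ _ hd.ne', one_mul]

theorem stmt_1_general {n : ℕ} (U : Set (EuclideanSpace ℝ (Fin n)))
    (hne : U.Nonempty) (hbdd : Bornology.IsBounded U)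
    (d : ℝ) (hd : d = Metric.diam U) (hdpos : 0 < d)
    (R : ℝ) (hR : d < R) :
    ∃ y : EuclideanSpace ℝ (Fin n), y ∉ closure U ∧
      IsLeast ((fun x => dist x y) '' closure U) (R - d) ∧
      IsGreatest ((fun x => dist x y) '' closure U) R := by
  have hbdd' : Bornology.IsBounded (closure U) := hbdd.closure
  rw [← diam_closure] at hd
  subst hd
  obtain ⟨a, ha, b, hb, hab⟩ := hbdd.isCompact_closure.exists_dist_eq_diam hne.closure
  obtain ⟨hay, hby⟩ := dist_lineMap_div hab hdpos hR.le
  refine ⟨_, fun hy => ?_, isLeast_image_dist_of_diametral hbdd' ha hb hay hby,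
    isGreatest_image_dist_of_diametral hbdd' ha hb hay hby⟩
  linarith [dist_le_diam_of_mem hbdd' ha hy]

theorem stmt_1 {n : ℕ} (U : Set (EuclideanSpace ℝ (Fin n)))
    (hne : U.Nonempty) (hopen : IsOpen U) (hbdd : Bornology.IsBounded U)
    (d : ℝ) (hd : d = Metric.diam U) (hdpos : 0 < d)
    (R : ℝ) (hR : d < R) :
    ∃ y : EuclideanSpace ℝ (Fin n), y ∉ closure U ∧
      IsLeast ((fun x => dist x y) '' closure U) (R - d) ∧
      IsGreatest ((fun x => dist x y) '' closure U) R :=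
  stmt_1_general U hne hbdd d hd hdpos R hR
end

section
/- Let d, c₀ > 0, z : [0,∞) → ℝ increasing with z(t) → ∞ as t → ∞, Λ : [0,∞) → [0,∞) continuous, and define y(t) = ∫₀^t exp(−∫_{s+1}^t e^{−z(x)} dx) Λ(s) ds. If ∫₀^∞ e^{−z(x)} dx = ∞, then limsup_{t→∞} y(t) ≤ limsup_{t→∞} (Λ(t) e^{z(t)}). -/
open Filter Real intervalIntegral

open scoped Topology

/-!
Put `g t = ∫₀^t e^{-z}`. Then `y = F / G` with `F t = ∫₀^t e^{g(s+1)} Λ(s) ds` and `G = e^g`, and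
`G → ∞` by the divergence hypothesis. The quotient of derivatives is
`F'/G' = e^{∫_s^{s+1} e^{-z}} · Λ(s) e^{z(s)}`, whose first factor tends to `1` because `e^{-z} → 0`.
A L'Hôpital-type bound `limsup F/G ≤ limsup F'/G'` finishes the proof.
-/

theorem tendsto_integral_add_one_of_tendsto_zero {w : ℝ → ℝ} (hw : Tendsto w atTop (𝓝 0)) :
    Tendsto (fun s => ∫ x in s..s + 1, w x) atTop (𝓝 0) := by
  rw [Metric.tendsto_atTop]
  intro ε hε
  obtain ⟨N, hN⟩ := Metric.tendsto_atTop.1 hw (ε / 2) (half_pos hε)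
  refine ⟨N, fun s hs => ?_⟩
  have hbound : ‖∫ x in s..s + 1, w x‖ ≤ ε / 2 * |s + 1 - s| :=
    norm_integral_le_of_norm_le_const fun x hx => by
      have hxN : N ≤ x := hs.trans (Set.uIoc_of_le (by linarith : s ≤ s + 1) ▸ hx).1.le
      simpa using (hN x hxN).le
  rw [Real.dist_eq, sub_zero]
  simp only [add_sub_cancel_left, abs_one, mul_one, Real.norm_eq_abs] at hbound
  linarith

theorem limsup_integral_div_le {f G G' : ℝ → ℝ} {C : ℝ} (hf : Continuous f)
    (hG : ∀ t, HasDerivAt G (G' t) t) (hG' : Continuous G') (hGtop : Tendsto G atTop atTop)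
    (hfC : ∀ᶠ s in atTop, f s ≤ C * G' s) :
    limsup (fun t => (((∫ s in (0:ℝ)..t, f s) / G t : ℝ) : EReal)) atTop ≤ C := by
  obtain ⟨T, hT⟩ := eventually_atTop.1 hfC
  set b := (∫ s in (0:ℝ)..T, f s) - C * G T
  have htail : ∀ t ≥ T, ∫ s in (0:ℝ)..t, f s ≤ b + C * G t := by
    intro t ht
    have hFTC : ∫ s in T..t, C * G' s = C * (G t - G T) := by
      rw [integral_const_mul, integral_eq_sub_of_hasDerivAt (fun s _ => hG s)
        (hG'.intervalIntegrable T t)]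
    have hmono : ∫ s in T..t, f s ≤ ∫ s in T..t, C * G' s :=
      integral_mono_on ht (hf.intervalIntegrable T t)
        ((continuous_const.mul hG').intervalIntegrable T t) fun s hs => hT s hs.1
    rw [← integral_add_adjacent_intervals (hf.intervalIntegrable 0 T) (hf.intervalIntegrable T t)]
    linarith
  have hbound : ∀ᶠ t in atTop, (∫ s in (0:ℝ)..t, f s) / G t ≤ b / G t + C := by
    filter_upwards [eventually_ge_atTop T, hGtop.eventually_gt_atTop 0] with t ht hGt
    rw [div_add' _ _ _ hGt.ne', div_le_div_iff_of_pos_right hGt]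
    exact htail t ht
  have hlim : Tendsto (fun t => ((b / G t + C : ℝ) : EReal)) atTop (𝓝 C) :=
    (continuous_coe_real_ereal.tendsto C).comp
      (by simpa using (tendsto_const_nhds.div_atTop hGtop).add_const C)
  calc limsup (fun t => (((∫ s in (0:ℝ)..t, f s) / G t : ℝ) : EReal)) atTop
      ≤ limsup (fun t => ((b / G t + C : ℝ) : EReal)) atTop :=
        limsup_le_limsup (hbound.mono fun t ht => EReal.coe_le_coe_iff.2 ht)
    _ = C := hlim.limsup_eq

theorem eventually_exp_mul_le_of_limsup_lt {g z Λ : ℝ → ℝ} (hΛnn : ∀ t, 0 ≤ Λ t)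
    (hgap : Tendsto (fun s => g (s + 1) - g s) atTop (𝓝 0)) {c : ℝ}
    (hc : limsup (fun t => ((Λ t * exp (z t) : ℝ) : EReal)) atTop < c) :
    ∀ᶠ s in atTop, exp (g (s + 1)) * Λ s ≤ c * (exp (g s) * exp (-(z s))) := by
  have hL0 : (0 : EReal) ≤ limsup (fun t => ((Λ t * exp (z t) : ℝ) : EReal)) atTop :=
    le_limsup_of_frequently_le (Frequently.of_forall fun t =>
      EReal.coe_nonneg.2 (mul_nonneg (hΛnn t) (exp_pos _).le))
  obtain ⟨M, hLM, hMc⟩ := EReal.exists_between_coe_real hc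
  have hM0 : 0 < M := EReal.coe_pos.1 (hL0.trans_lt hLM)
  have hc0 : 0 < c := hM0.trans (EReal.coe_lt_coe_iff.1 hMc)
  have hΛM : ∀ᶠ s in atTop, Λ s * exp (z s) < M :=
    (eventually_lt_of_limsup_lt hLM).mono fun s hs => EReal.coe_lt_coe_iff.1 hs
  have hρ : ∀ᶠ s in atTop, exp (g (s + 1) - g s) < c / M := by
    have hlim := (continuous_exp.tendsto 0).comp hgap
    rw [exp_zero] at hlim
    exact hlim.eventually (gt_mem_nhds ((one_lt_div hM0).2 (EReal.coe_lt_coe_iff.1 hMc)))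
  filter_upwards [hΛM, hρ] with s hΛs hρs
  calc exp (g (s + 1)) * Λ s
      = exp (g (s + 1) - g s) * (Λ s * exp (z s)) * (exp (g s) * exp (-(z s))) := by
        rw [exp_sub, exp_neg]; field_simp
    _ ≤ c / M * M * (exp (g s) * exp (-(z s))) :=
        mul_le_mul_of_nonneg_right (mul_le_mul hρs.le hΛs.le
          (mul_nonneg (hΛnn s) (exp_pos _).le) (div_pos hc0 hM0).le) (by positivity)
    _ = c * (exp (g s) * exp (-(z s))) := by rw [div_mul_cancel₀ _ hM0.ne']

theorem stmt_7_general (z Λ : ℝ → ℝ)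
    (hzc : Continuous z)
    (hztop : Tendsto z atTop atTop)
    (hΛc : Continuous Λ) (hΛnn : ∀ t, 0 ≤ Λ t)
    (hdiv : Tendsto (fun t => ∫ x in (0:ℝ)..t, Real.exp (-(z x))) atTop atTop)
    (y : ℝ → ℝ)
    (hy : ∀ t ≥ (0:ℝ), y t =
      ∫ s in (0:ℝ)..t, Real.exp (-(∫ x in (s + 1)..t, Real.exp (-(z x)))) * Λ s) :
    Filter.limsup (fun t => ((y t : ℝ) : EReal)) atTop ≤
      Filter.limsup (fun t => ((Λ t * Real.exp (z t) : ℝ) : EReal)) atTop := by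
  set g : ℝ → ℝ := fun t => ∫ x in (0:ℝ)..t, exp (-(z x))
  have hw : Continuous fun x => exp (-(z x)) := by fun_prop
  have hg : ∀ t, HasDerivAt g (exp (-(z t))) t := fun t =>
    (hw.integral_hasStrictDerivAt 0 t).hasDerivAt
  have hgc : Continuous g := continuous_iff_continuousAt.2 fun t => (hg t).continuousAt
  have hg_sub : ∀ a b, g b - g a = ∫ x in a..b, exp (-(z x)) := fun a b =>
    integral_interval_sub_left (hw.intervalIntegrable 0 b) (hw.intervalIntegrable 0 a)
  have hy_div : ∀ᶠ t in atTop, y t = (∫ s in (0:ℝ)..t, exp (g (s + 1)) * Λ s) / exp (g t) := by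
    filter_upwards [eventually_ge_atTop 0] with t ht
    rw [hy t ht, eq_div_iff (exp_pos _).ne', ← integral_mul_const]
    refine integral_congr fun s _ => ?_
    rw [← hg_sub, neg_sub, exp_sub]
    field_simp
  rw [limsup_congr (hy_div.mono fun t ht => by rw [ht]), ← EReal.le_of_forall_lt_iff_le]
  intro c hc
  have hgap : Tendsto (fun s => g (s + 1) - g s) atTop (𝓝 0) := by
    simpa only [hg_sub, Function.comp_def] using
      tendsto_integral_add_one_of_tendsto_zero (tendsto_exp_neg_atTop_nhds_zero.comp hztop)
  exact limsup_integral_div_le (by fun_prop) (fun t => (hg t).exp) (by fun_prop)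
    (tendsto_exp_atTop.comp hdiv) (eventually_exp_mul_le_of_limsup_lt hΛnn hgap hc)

theorem stmt_7 (z Λ : ℝ → ℝ)
    (hzm : MonotoneOn z (Set.Ici (0:ℝ)))
    (hzc : Continuous z)
    (hztop : Tendsto z atTop atTop)
    (hΛc : Continuous Λ) (hΛnn : ∀ t, 0 ≤ Λ t)
    (hdiv : Tendsto (fun t => ∫ x in (0:ℝ)..t, Real.exp (-(z x))) atTop atTop)
    (y : ℝ → ℝ)
    (hy : ∀ t ≥ (0:ℝ), y t =
      ∫ s in (0:ℝ)..t, Real.exp (-(∫ x in (s + 1)..t, Real.exp (-(z x)))) * Λ s) :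
    Filter.limsup (fun t => ((y t : ℝ) : EReal)) atTop ≤
      Filter.limsup (fun t => ((Λ t * Real.exp (z t) : ℝ) : EReal)) atTop :=
  stmt_7_general z Λ hzc hztop hΛc hΛnn hdiv y hy
end
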